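/- arXiv:2407.05966 — 4 statements merged into one kernel-verified Lean document; each statement's English description precedes it below -/
import Mathlib

section
/- Let V̄ be the fixed point of Π ∘ T where T(f) = g + γ P f with contraction factor γ ∈ (0,1) on L²(ξ) (P non-expansive, Π orthogonal projection onto closed subspace K), and let V° be the fixed point of T. Then ‖V̄ − V°‖²_ξ ≤ (1 − γ²)^{-1} · inf_{f ∈ K} ‖f − V°‖²_ξ. -/
/-!
Write `Π` for the orthogonal projection onto `K` and `T` for the `γ`-Lipschitz map `f ↦ g + γ • P f`.
Since `v̄ - Π v°` lies in `K` and `Π v° - v°` is orthogonal to `K`, Pythagoras splits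
`‖v̄ - v°‖²` as `‖v̄ - Π v°‖² + ‖Π v° - v°‖²`. The first term is `‖Π (T v̄ - T v°)‖² ≤ γ² ‖v̄ - v°‖²`,
and the second is the best approximation error of `v°` in `K`; rearranging gives the bound.
-/

open Function

namespace Submodule

variable {𝕜 E : Type*} [RCLike 𝕜] [NormedAddCommGroup E] [InnerProductSpace 𝕜 E]
  (K : Submodule 𝕜 E) [K.HasOrthogonalProjection]

theorem norm_sub_sq_eq_norm_sub_starProjection_sq_add {u : E} (hu : u ∈ K) (v : E) :
    ‖u - v‖ ^ 2 = ‖u - K.starProjection v‖ ^ 2 + ‖K.starProjection v - v‖ ^ 2 := by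
  have hperp : inner 𝕜 (u - K.starProjection v) (K.starProjection v - v) = 0 := by
    rw [← neg_sub v, inner_neg_right, neg_eq_zero]
    exact K.inner_right_of_mem_orthogonal (K.sub_mem hu (K.starProjection_apply_mem v))
      (K.sub_starProjection_mem_orthogonal v)
  simpa only [sub_add_sub_cancel, ← sq] using
    norm_add_sq_eq_norm_sq_add_norm_sq_of_inner_eq_zero _ _ hperp

theorem norm_starProjection_sub_sq_le_iInf (v : E) :
    ‖K.starProjection v - v‖ ^ 2 ≤ ⨅ u : K, ‖(u : E) - v‖ ^ 2 :=
  le_ciInf fun u => by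
    rw [K.norm_sub_sq_eq_norm_sub_starProjection_sq_add u.2 v]
    exact le_add_of_nonneg_left (sq_nonneg _)

variable {K} {T : E → E} {c : ℝ}

theorem norm_sub_starProjection_le_of_isFixedPt (hT : ∀ x y, ‖T x - T y‖ ≤ c * ‖x - y‖)
    {v₀ v : E} (hv₀ : IsFixedPt T v₀) (hv : IsFixedPt (K.starProjection ∘ T) v) :
    ‖v - K.starProjection v₀‖ ≤ c * ‖v - v₀‖ :=
  calc ‖v - K.starProjection v₀‖ = ‖K.starProjection (T v - T v₀)‖ := by
        rw [map_sub, hv₀.eq]; exact congrArg (‖· - _‖) hv.eq.symm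
    _ ≤ ‖T v - T v₀‖ := K.norm_starProjection_apply_le _
    _ ≤ c * ‖v - v₀‖ := hT v v₀

theorem norm_sub_sq_le_of_isFixedPt_starProjection_comp (hc₀ : 0 ≤ c) (hc₁ : c < 1)
    (hT : ∀ x y, ‖T x - T y‖ ≤ c * ‖x - y‖)
    {v₀ v : E} (hv₀ : IsFixedPt T v₀) (hv : IsFixedPt (K.starProjection ∘ T) v) :
    ‖v - v₀‖ ^ 2 ≤ (1 - c ^ 2)⁻¹ * ⨅ u : K, ‖(u : E) - v₀‖ ^ 2 := by
  have hvK : v ∈ K := hv.eq ▸ K.starProjection_apply_mem (T v)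
  have hpyth := K.norm_sub_sq_eq_norm_sub_starProjection_sq_add hvK v₀
  have hcontr := norm_sub_starProjection_le_of_isFixedPt hT hv₀ hv
  have hcontr_sq : ‖v - K.starProjection v₀‖ ^ 2 ≤ c ^ 2 * ‖v - v₀‖ ^ 2 := by
    rw [← mul_pow]; exact pow_le_pow_left₀ (norm_nonneg _) hcontr 2
  rw [le_inv_mul_iff₀ (by nlinarith)]
  calc (1 - c ^ 2) * ‖v - v₀‖ ^ 2 ≤ ‖K.starProjection v₀ - v₀‖ ^ 2 := by linarith
    _ ≤ ⨅ u : K, ‖(u : E) - v₀‖ ^ 2 := K.norm_starProjection_sub_sq_le_iInf v₀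

end Submodule

theorem stmt3_general {H : Type*} [NormedAddCommGroup H] [InnerProductSpace ℝ H]
    (P : H →L[ℝ] H) (hP : ∀ h, ‖P h‖ ≤ ‖h‖)
    (K : Submodule ℝ H) [CompleteSpace K] (g : H) (γ : ℝ) (hγ0 : 0 < γ) (hγ1 : γ < 1)
    (v0 vb : H) (hv0 : v0 = g + γ • P v0)
    (hvb : vb = (Submodule.orthogonalProjection K (g + γ • P vb) : H)) :
    ‖vb - v0‖ ^ 2 ≤ (1 - γ ^ 2)⁻¹ * ⨅ f : K, ‖(f : H) - v0‖ ^ 2 := by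
  refine K.norm_sub_sq_le_of_isFixedPt_starProjection_comp (T := fun f => g + γ • P f)
    hγ0.le hγ1 (fun x y => ?_) hv0.symm hvb.symm
  calc ‖(g + γ • P x) - (g + γ • P y)‖ = γ * ‖P (x - y)‖ := by
        rw [add_sub_add_left_eq_sub, ← smul_sub, ← map_sub, norm_smul, Real.norm_of_nonneg hγ0.le]
    _ ≤ γ * ‖x - y‖ := mul_le_mul_of_nonneg_left (hP _) hγ0.le

/-- Tsitsiklis–Van Roy approximation-factor bound: if `v0` is the fixed point
of the `γ`-contraction `T f = g + γ • P f` (with `P` non-expansive on the Hilbert space `H`)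
and `vb` is the fixed point of `Π_K ∘ T`, then
`‖vb − v0‖² ≤ (1 − γ²)⁻¹ · inf_{f ∈ K} ‖f − v0‖²`. -/
theorem stmt3 {H : Type*} [NormedAddCommGroup H] [InnerProductSpace ℝ H] [CompleteSpace H]
    (P : H →L[ℝ] H) (hP : ∀ h, ‖P h‖ ≤ ‖h‖)
    (K : Submodule ℝ H) [CompleteSpace K] (g : H) (γ : ℝ) (hγ0 : 0 < γ) (hγ1 : γ < 1)
    (v0 vb : H) (hv0 : v0 = g + γ • P v0)
    (hvb : vb = (Submodule.orthogonalProjection K (g + γ • P vb) : H)) :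
    ‖vb - v0‖ ^ 2 ≤ (1 - γ ^ 2)⁻¹ * ⨅ f : K, ‖(f : H) - v0‖ ^ 2 :=
  stmt3_general P hP K g γ hγ0 hγ1 v0 vb hv0 hvb
end

section
/- For the second-order generator approximation with coefficients determined by a₀ = −3/2, a₁ = 2, a₂ = −1/2 (i.e., the solution of Σ a_j j^k = δ_{k,1} for k = 0,1,2), and constants c₁ = 4/(2βη+3), c₂ = −1/(2βη+3) where β, η > 0 satisfy βη < 1/3, define the sequence d_j by d_0 = 1, d_{−1} = 0, and d_j = c₁ d_{j−1} + c₂ d_{j−2} for j ≥ 1. Then |d_j| ≤ 12 (1/(1+βη)^j + 1/2^j) for all j ≥ 0. -/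
/-!
The characteristic polynomial of the recursion, `(2βη + 3) x² - 4x + 1`, has the roots
`a = 1/(2 - q)` and `b = 1/(2 + q)` with `q = √(1 - 2βη)`, so `d_j (a - b) = a^(j+1) - b^(j+1)`.
Since `0 < b < a`, this gives `0 ≤ d_j ≤ a/(a - b) · a^j`; finally `a ≤ 1/(1 + βη)`, and
`a/(a - b) = (2 + q)/(2q) ≤ 12` because `q² > 1/3`.
-/

theorem mul_sub_eq_pow_succ_sub_pow_succ_of_recurrence {R : Type*} [CommRing R] {a b : R}
    {d : ℕ → R} (h0 : d 0 = 1) (h1 : d 1 = a + b)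
    (hrec : ∀ j, d (j + 2) = (a + b) * d (j + 1) - a * b * d j) (j : ℕ) :
    d j * (a - b) = a ^ (j + 1) - b ^ (j + 1) := by
  induction j using Nat.twoStepInduction with
  | zero => rw [h0]; ring
  | one => rw [h1]; ring
  | more j ih ih' => rw [hrec, sub_mul, mul_assoc, ih', mul_assoc, ih]; ring

theorem abs_le_div_sub_mul_pow_of_mul_sub_eq {K : Type*} [Field K] [LinearOrder K]
    [IsStrictOrderedRing K] {a b x : K} (hb : 0 ≤ b) (hba : b < a) {j : ℕ}
    (hx : x * (a - b) = a ^ (j + 1) - b ^ (j + 1)) :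
    |x| ≤ a / (a - b) * a ^ j := by
  have hab : 0 < a - b := sub_pos.mpr hba
  have hpow : b ^ (j + 1) ≤ a ^ (j + 1) := pow_le_pow_left₀ hb hba.le _
  have hx' : x = (a ^ (j + 1) - b ^ (j + 1)) / (a - b) := eq_div_of_mul_eq hab.ne' hx
  rw [abs_of_nonneg (by rw [hx']; exact div_nonneg (sub_nonneg.mpr hpow) hab.le), hx',
    div_mul_eq_mul_div, ← pow_succ']
  gcongr
  exact sub_le_self _ (pow_nonneg hb _)

section CharacteristicRoots

variable {t q : ℝ}

theorem inv_two_sub_add_inv_two_add (hq : q ^ 2 = 1 - 2 * t) (hq0 : 0 ≤ q) (hq2 : q < 2) :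
    1 / (2 - q) + 1 / (2 + q) = 4 / (2 * t + 3) := by
  have : 2 * t + 3 = (2 - q) * (2 + q) := by linear_combination hq
  rw [this, div_add_div _ _ (by linarith) (by linarith)]
  ring

theorem inv_two_sub_mul_inv_two_add (hq : q ^ 2 = 1 - 2 * t) :
    1 / (2 - q) * (1 / (2 + q)) = 1 / (2 * t + 3) := by
  rw [div_mul_div_comm, one_mul]
  congr 1
  linear_combination -hq

theorem inv_two_sub_le_inv_one_add (hq : q ^ 2 = 1 - 2 * t) (ht0 : 0 ≤ t) :
    1 / (2 - q) ≤ 1 / (1 + t) := by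
  have : q ≤ 1 - t := by nlinarith
  gcongr
  linarith

theorem inv_two_sub_div_sub_inv_two_add_le (hq : q ^ 2 = 1 - 2 * t) (hq0 : 0 ≤ q) (hq2 : q < 2)
    (ht : t < 1 / 3) : 1 / (2 - q) / (1 / (2 - q) - 1 / (2 + q)) ≤ 12 := by
  have hq' : 2 / 23 ≤ q := by nlinarith
  have : 1 / (2 - q) / (1 / (2 - q) - 1 / (2 + q)) = (2 + q) / (2 * q) := by
    field_simp [show 2 - q ≠ 0 by linarith, show 2 + q ≠ 0 by linarith, show q ≠ 0 by linarith]
    ring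
  rw [this, div_le_iff₀ (by linarith)]
  linarith

end CharacteristicRoots

/-- stability of the second-order backward-difference recursion.
With `c₁ = 4/(2βη+3)`, `c₂ = −1/(2βη+3)`, `βη < 1/3`, the sequence `d_0 = 1`,
`d_{-1} = 0`, `d_j = c₁ d_{j−1} + c₂ d_{j−2}` satisfies
`|d_j| ≤ 12 (1/(1+βη)^j + 1/2^j)` for all `j ≥ 0`. -/
theorem stmt8 (β η : ℝ) (hβ : 0 < β) (hη : 0 < η) (h : β * η < 1 / 3)
    (d : ℕ → ℝ) (h0 : d 0 = 1)
    (h1 : d 1 = (4 / (2 * β * η + 3)) * d 0)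
    (hrec : ∀ j : ℕ,
      d (j + 2) = (4 / (2 * β * η + 3)) * d (j + 1) + (-(1 / (2 * β * η + 3))) * d j) :
    ∀ j : ℕ, |d j| ≤ 12 * (1 / (1 + β * η) ^ j + 1 / 2 ^ j) := by
  intro j
  have ht : 0 < β * η := mul_pos hβ hη
  set q := √(1 - 2 * (β * η))
  have hq : q ^ 2 = 1 - 2 * (β * η) := Real.sq_sqrt (by linarith)
  have hq0 : 0 < q := Real.sqrt_pos.mpr (by linarith)
  have hq2 : q < 2 := by nlinarith
  simp only [mul_assoc 2 β η] at h1 hrec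
  have hsum := inv_two_sub_add_inv_two_add hq hq0.le hq2
  have hprod := inv_two_sub_mul_inv_two_add hq
  have hd := mul_sub_eq_pow_succ_sub_pow_succ_of_recurrence (d := d) (a := 1 / (2 - q))
    (b := 1 / (2 + q)) h0 (by rw [h1, h0, hsum]; ring)
    (fun j ↦ by rw [hrec, hsum, hprod]; ring) j
  calc |d j| ≤ 1 / (2 - q) / (1 / (2 - q) - 1 / (2 + q)) * (1 / (2 - q)) ^ j :=
        abs_le_div_sub_mul_pow_of_mul_sub_eq (by positivity)
          (one_div_lt_one_div_of_lt (by linarith) (by linarith)) hd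
    _ ≤ 12 * (1 / (1 + β * η)) ^ j := by
        gcongr ?_ * ?_ ^ j
        · exact inv_two_sub_div_sub_inv_two_add_le hq hq0.le hq2 h
        · exact inv_two_sub_le_inv_one_add hq ht.le
    _ ≤ 12 * (1 / (1 + β * η) ^ j + 1 / 2 ^ j) := by
        rw [one_div_pow]
        gcongr
        exact le_add_of_nonneg_right (by positivity)
end

section
/- Under the setup where A is the diffusion generator with stationary measure ξ satisfying the coercivity −⟨f, A f⟩_ξ ≥ (λ_min/2)‖∇f‖²_ξ, and P_t the associated semigroup with ‖P_t f‖_ξ ≤ ‖f‖_ξ, for any β, t > 0 and f ∈ L²(ξ): ⟨f, t^{-1}(I − e^{−βt}P_t) f⟩_ξ ≥ (β/t)∫_0^t e^{−2βs}‖P_s f‖²_ξ ds + (λ_min/(2t))∫_0^t e^{−2βs}‖∇P_s f‖²_ξ ds + (1/(2t))‖f − e^{−βt}P_t f‖²_ξ. -/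
open MeasureTheory intervalIntegral

/-!
Write `u s = e^{-βs}(β - A)P_s f` and `V r = ∫_0^r u`, so that `V t = f - e^{-βt}P_t f` and
`f - V s = e^{-βs}P_s f`. Splitting `⟪f, u s⟫ = ⟪V s, u s⟫ + ⟪f - V s, u s⟫` and integrating,
the first part is `½‖V t‖²` because `V' = u`, and the second part is bounded below by the
coercivity of `β - A` applied to `e^{-βs}P_s f`.
-/

section Primitive

variable {E : Type*} [NormedAddCommGroup E] [InnerProductSpace ℝ E] [CompleteSpace E]
  {u : ℝ → E}

theorem integral_inner_primitive_self (hu : Continuous u) (a b : ℝ) :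
    ∫ s in a..b, inner ℝ (∫ r in a..s, u r) (u s) = ‖∫ r in a..b, u r‖ ^ 2 / 2 := by
  set V : ℝ → E := fun s => ∫ r in a..s, u r
  have hV : ∀ s, HasDerivAt V (u s) s := fun s =>
    integral_hasDerivAt_right (hu.intervalIntegrable _ _)
      hu.aestronglyMeasurable.stronglyMeasurableAtFilter hu.continuousAt
  have hVc : Continuous V := continuous_iff_continuousAt.2 fun s => (hV s).continuousAt
  have hsq : ∀ s, HasDerivAt (fun s => ‖V s‖ ^ 2) (2 * inner ℝ (V s) (u s)) s := fun s =>
    ((hV s).norm_sq).congr_deriv (by ring)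
  have hFTC := integral_eq_sub_of_hasDerivAt (fun s _ => hsq s)
    ((continuous_const.mul (hVc.inner hu)).intervalIntegrable a b)
  simp only [V, intervalIntegral.integral_const_mul, integral_same, norm_zero] at hFTC
  linarith

theorem inner_integral_eq_half_norm_sq_add (hu : Continuous u) (x : E) (a b : ℝ) :
    inner ℝ x (∫ r in a..b, u r)
      = ‖∫ r in a..b, u r‖ ^ 2 / 2 + ∫ s in a..b, inner ℝ (x - ∫ r in a..s, u r) (u s) := by
  have hV : Continuous fun s => ∫ r in a..s, u r := continuous_primitive hu.intervalIntegrable a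
  have hsplit : ∀ s, inner ℝ x (u s)
      = inner ℝ (∫ r in a..s, u r) (u s) + inner ℝ (x - ∫ r in a..s, u r) (u s) := fun s => by
    rw [inner_sub_left]; ring
  rw [← integral_inner_primitive_self hu, ← integral_add ((hV.inner hu).intervalIntegrable _ _)
    (((continuous_const.sub hV).inner hu).intervalIntegrable _ _), ← funext hsplit]
  exact ((innerSL ℝ x).intervalIntegral_comp_comm (hu.intervalIntegrable a b)).symm

end Primitive

theorem integral_mul_const_mul_add_const_mul {w φ ψ : ℝ → ℝ} (hw : Continuous w)
    (hφ : Continuous φ) (hψ : Continuous ψ) (c d a b : ℝ) :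
    ∫ x in a..b, w x * (c * φ x + d * ψ x)
      = c * (∫ x in a..b, w x * φ x) + d * ∫ x in a..b, w x * ψ x := by
  rw [← intervalIntegral.integral_const_mul, ← intervalIntegral.integral_const_mul,
    ← intervalIntegral.integral_add]
  · congr 1 with x
    ring
  · exact ((hw.mul hφ).const_mul c).intervalIntegrable a b
  · exact ((hw.mul hψ).const_mul d).intervalIntegrable a b

theorem exp_mul_le_inner_exp_smul {H : Type*} [NormedAddCommGroup H] [InnerProductSpace ℝ H]
    {A : H →ₗ[ℝ] H} {G : H → ℝ} {β lmin : ℝ}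
    (hcoer : ∀ g : H, β * ‖g‖ ^ 2 + (lmin / 2) * (G g) ^ 2 ≤ inner ℝ g (β • g - A g))
    (g : H) (s : ℝ) :
    Real.exp (-2 * β * s) * (β * ‖g‖ ^ 2 + (lmin / 2) * G g ^ 2)
      ≤ inner ℝ (Real.exp (-β * s) • g) (Real.exp (-β * s) • (β • g - A g)) := by
  have hexp_two : Real.exp (-2 * β * s) = Real.exp (-β * s) * Real.exp (-β * s) := by
    rw [← Real.exp_add]; ring_nf
  rw [real_inner_smul_left, real_inner_smul_right, hexp_two, mul_assoc]
  exact mul_le_mul_of_nonneg_left (mul_le_mul_of_nonneg_left (hcoer g) (Real.exp_pos _).le)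
    (Real.exp_pos _).le

theorem stmt12_general {H : Type*} [NormedAddCommGroup H] [InnerProductSpace ℝ H] [CompleteSpace H]
    (β lmin t : ℝ) (ht : 0 < t)
    (A : H →ₗ[ℝ] H) (P : ℝ → H →L[ℝ] H) (G : H → ℝ)
    (hcoer : ∀ g : H, β * ‖g‖ ^ 2 + (lmin / 2) * (G g) ^ 2 ≤ (inner ℝ g (β • g - A g) : ℝ))
    (f : H)
    (hid : ∀ u : ℝ, 0 ≤ u → u ≤ t →
      f - Real.exp (-β * u) • P u f
        = ∫ s in (0 : ℝ)..u, Real.exp (-β * s) • (β • P s f - A (P s f)))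
    (hc1 : Continuous fun s : ℝ => P s f)
    (hc2 : Continuous fun s : ℝ => A (P s f))
    (hc3 : Continuous fun s : ℝ => G (P s f)) :
    (β / t) * (∫ s in (0 : ℝ)..t, Real.exp (-2 * β * s) * ‖P s f‖ ^ 2)
      + (lmin / (2 * t)) * (∫ s in (0 : ℝ)..t, Real.exp (-2 * β * s) * (G (P s f)) ^ 2)
      + (1 / (2 * t)) * ‖f - Real.exp (-β * t) • P t f‖ ^ 2
    ≤ (inner ℝ f (t⁻¹ • (f - Real.exp (-β * t) • P t f)) : ℝ) := by
  set u : ℝ → H := fun s => Real.exp (-β * s) • (β • P s f - A (P s f))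
  have hu : Continuous u := (by fun_prop : Continuous fun s : ℝ => Real.exp (-β * s)).smul
    ((hc1.const_smul β).sub hc2)
  have hweight : Continuous fun s : ℝ => Real.exp (-2 * β * s) := by fun_prop
  have hlower : β * (∫ s in (0 : ℝ)..t, Real.exp (-2 * β * s) * ‖P s f‖ ^ 2)
        + (lmin / 2) * (∫ s in (0 : ℝ)..t, Real.exp (-2 * β * s) * G (P s f) ^ 2)
      ≤ ∫ s in (0 : ℝ)..t, inner ℝ (f - ∫ r in (0 : ℝ)..s, u r) (u s) := by
    rw [← integral_mul_const_mul_add_const_mul (φ := fun s => ‖P s f‖ ^ 2)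
      (ψ := fun s => G (P s f) ^ 2) hweight (hc1.norm.pow 2) (hc3.pow 2)]
    refine integral_mono_on ht.le
      ((hweight.mul ((continuous_const.mul (hc1.norm.pow 2)).add
        (continuous_const.mul (hc3.pow 2)))).intervalIntegrable 0 t)
      (((continuous_const.sub (continuous_primitive hu.intervalIntegrable 0)).inner
        hu).intervalIntegrable 0 t) fun s hs => ?_
    rw [← hid s hs.1 hs.2, sub_sub_cancel]
    exact exp_mul_le_inner_exp_smul hcoer (P s f) s
  have hsplit := inner_integral_eq_half_norm_sq_add hu f 0 t
  rw [← hid t ht.le le_rfl] at hsplit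
  rw [real_inner_smul_right, hsplit]
  linear_combination mul_le_mul_of_nonneg_left hlower (inv_nonneg.2 ht.le)

/-- coercivity of the discretized operator `t⁻¹(I − e^{−βt}P_t)`.
Here `H` abstracts `L²(ξ)`, `A` the diffusion generator, `P` its semigroup, and
`G g` the gradient norm `‖∇g‖_ξ`; the coercivity hypothesis is
`⟨g, (β−A)g⟩ ≥ β‖g‖² + (λ_min/2) G(g)²` and the integral identity is Dynkin's formula
`f − e^{−βt}P_t f = ∫_0^t e^{−βs}(β − A)P_s f ds`. Conclusion:
`⟨f, t⁻¹(I − e^{−βt}P_t)f⟩ ≥ (β/t)∫_0^t e^{−2βs}‖P_s f‖² + (λ_min/(2t))∫_0^t e^{−2βs}‖∇P_s f‖²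
 + (1/(2t))‖f − e^{−βt}P_t f‖²`. -/
theorem stmt12 {H : Type*} [NormedAddCommGroup H] [InnerProductSpace ℝ H] [CompleteSpace H]
    (β lmin t : ℝ) (hβ : 0 < β) (hl : 0 < lmin) (ht : 0 < t)
    (A : H →ₗ[ℝ] H) (P : ℝ → H →L[ℝ] H) (G : H → ℝ)
    (hG : ∀ g, 0 ≤ G g) (hGsmul : ∀ (c : ℝ) (g : H), G (c • g) = |c| * G g)
    (hnonexp : ∀ s : ℝ, 0 ≤ s → ∀ g : H, ‖P s g‖ ≤ ‖g‖)
    (hcoer : ∀ g : H, β * ‖g‖ ^ 2 + (lmin / 2) * (G g) ^ 2 ≤ (inner ℝ g (β • g - A g) : ℝ))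
    (f : H)
    (hid : ∀ u : ℝ, 0 ≤ u → u ≤ t →
      f - Real.exp (-β * u) • P u f
        = ∫ s in (0 : ℝ)..u, Real.exp (-β * s) • (β • P s f - A (P s f)))
    (hc1 : Continuous fun s : ℝ => P s f)
    (hc2 : Continuous fun s : ℝ => A (P s f))
    (hc3 : Continuous fun s : ℝ => G (P s f)) :
    (β / t) * (∫ s in (0 : ℝ)..t, Real.exp (-2 * β * s) * ‖P s f‖ ^ 2)
      + (lmin / (2 * t)) * (∫ s in (0 : ℝ)..t, Real.exp (-2 * β * s) * (G (P s f)) ^ 2)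
      + (1 / (2 * t)) * ‖f - Real.exp (-β * t) • P t f‖ ^ 2
    ≤ (inner ℝ f (t⁻¹ • (f - Real.exp (-β * t) • P t f)) : ℝ) :=
  stmt12_general β lmin t ht A P G hcoer f hid hc1 hc2 hc3
end

section
/- Let μ be a probability measure on ℝ^d of the form μ = ∫_0^∞ w(t) (π₀ * φ_t) dt, where w is a probability density on (0,∞), φ_t is the Gaussian density N(0, tI_d), and π₀ is a smooth positive probability density with ‖∇log π₀(x)‖₂ ≤ L for all x. Then ‖∇log μ(x)‖₂ ≤ L for all x. -/
open MeasureTheory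

/-- The Gaussian density `N(0, t I_d)` on `ℝ^d`. -/
noncomputable def gaussDensity {d : ℕ} (t : ℝ) (y : EuclideanSpace ℝ (Fin d)) : ℝ :=
  (2 * Real.pi * t) ^ (-(d : ℝ) / 2) * Real.exp (-‖y‖ ^ 2 / (2 * t))

/-- let `μ(x) = ∫_0^∞ w(t) (π₀ * φ_t)(x) dt` be a Gaussian-mixture smoothing
of a smooth positive probability density `π₀` with `‖∇ log π₀‖ ≤ L` everywhere, where `w`
is a probability density on `(0,∞)` and `φ_t` the `N(0, tI_d)` density. Then
`‖∇ log μ(x)‖ ≤ L` for every `x`. -/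
theorem stmt18 (d : ℕ) (hd : 0 < d) (L : ℝ)
    (π₀ : EuclideanSpace ℝ (Fin d) → ℝ) (hπsmooth : ContDiff ℝ (⊤ : ℕ∞) π₀)
    (hπpos : ∀ x, 0 < π₀ x) (hπprob : ∫ x, π₀ x = 1)
    (hπlip : ∀ x, ‖gradient (fun y => Real.log (π₀ y)) x‖ ≤ L)
    (w : ℝ → ℝ) (hwmeas : Measurable w) (hwpos : ∀ t, 0 ≤ w t)
    (hwprob : ∫ t in Set.Ioi (0 : ℝ), w t = 1)
    (μ : EuclideanSpace ℝ (Fin d) → ℝ)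
    (hμ : ∀ x, μ x = ∫ t in Set.Ioi (0 : ℝ),
      w t * ∫ y, π₀ (x - y) * gaussDensity t y)
    (hconv : ∀ (x : EuclideanSpace ℝ (Fin d)) (t : ℝ), 0 < t →
      Integrable (fun y => π₀ (x - y) * gaussDensity t y))
    (hμint : ∀ x, IntegrableOn
      (fun t => w t * ∫ y, π₀ (x - y) * gaussDensity t y) (Set.Ioi 0)) :
    ∀ x, ‖gradient (fun z => Real.log (μ z)) x‖ ≤ L := by
  have hL : 0 ≤ L := le_trans (norm_nonneg _) (hπlip 0)
  -- log π₀ is Lipschitz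
  have hlip0 : LipschitzWith L.toNNReal (fun y => Real.log (π₀ y)) := by
    apply lipschitzWith_of_nnnorm_fderiv_le (𝕜 := ℝ)
    · intro x
      exact (Real.differentiableAt_log (hπpos x).ne').comp x
        ((hπsmooth.differentiable (by simp)) x)
    · intro x
      have h : ‖fderiv ℝ (fun y => Real.log (π₀ y)) x‖
          = ‖gradient (fun y => Real.log (π₀ y)) x‖ := by
        rw [gradient]; exact (LinearIsometryEquiv.norm_map _ _).symm
      rw [← NNReal.coe_le_coe, coe_nnnorm, Real.coe_toNNReal _ hL, h]
      exact hπlip x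
  -- pointwise comparison of π₀
  have hkey : ∀ a b : EuclideanSpace ℝ (Fin d),
      π₀ a ≤ Real.exp (L * ‖a - b‖) * π₀ b := by
    intro a b
    have h1 : Real.log (π₀ a) - Real.log (π₀ b) ≤ L * ‖a - b‖ := by
      have := hlip0.dist_le_mul a b
      rw [Real.dist_eq, Real.coe_toNNReal _ hL, dist_eq_norm] at this
      exact le_trans (le_abs_self _) this
    calc π₀ a = Real.exp (Real.log (π₀ a)) := (Real.exp_log (hπpos a)).symm
      _ ≤ Real.exp (L * ‖a - b‖ + Real.log (π₀ b)) := by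
          apply Real.exp_le_exp.mpr; linarith
      _ = Real.exp (L * ‖a - b‖) * π₀ b := by
          rw [Real.exp_add, Real.exp_log (hπpos b)]
  -- gaussian density is nonneg (in fact positive for t>0)
  have hgt : ∀ (t : ℝ) (y : EuclideanSpace ℝ (Fin d)), 0 < t → 0 < gaussDensity t y := by
    intro t y ht
    unfold gaussDensity
    positivity
  -- comparison of μ
  have hμmono : ∀ x x' : EuclideanSpace ℝ (Fin d),
      μ x ≤ Real.exp (L * ‖x - x'‖) * μ x' := by
    intro x x'
    rw [hμ x, hμ x', ← integral_const_mul]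
    apply setIntegral_mono_on (hμint x) ((hμint x').const_mul _) measurableSet_Ioi
    intro t ht
    have hinner : (∫ y, π₀ (x - y) * gaussDensity t y)
        ≤ Real.exp (L * ‖x - x'‖) * ∫ y, π₀ (x' - y) * gaussDensity t y := by
      rw [← integral_const_mul]
      apply integral_mono (hconv x t ht) ((hconv x' t ht).const_mul _)
      intro y
      have h := hkey (x - y) (x' - y)
      have he : x - y - (x' - y) = x - x' := by abel
      rw [he] at h
      have := mul_le_mul_of_nonneg_right h (hgt t y ht).le
      simpa [mul_assoc] using this
    calc w t * ∫ y, π₀ (x - y) * gaussDensity t y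
        ≤ w t * (Real.exp (L * ‖x - x'‖) * ∫ y, π₀ (x' - y) * gaussDensity t y) :=
          mul_le_mul_of_nonneg_left hinner (hwpos t)
      _ = Real.exp (L * ‖x - x'‖) * (w t * ∫ y, π₀ (x' - y) * gaussDensity t y) := by ring
  -- positivity of μ
  have hμpos : ∀ x, 0 < μ x := by
    intro x
    rw [hμ x]
    have h0 : ∀ t ∈ Set.Ioi (0:ℝ), 0 ≤ w t * ∫ y, π₀ (x - y) * gaussDensity t y := by
      intro t ht
      apply mul_nonneg (hwpos t)
      exact integral_nonneg fun y => mul_nonneg (hπpos _).le (hgt t y ht).le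
    rw [setIntegral_pos_iff_support_of_nonneg_ae
      ((ae_restrict_iff' measurableSet_Ioi).mpr (Filter.Eventually.of_forall h0)) (hμint x)]
    by_contra hz
    push_neg at hz
    have hz0 : volume (Function.support
        (fun t => w t * ∫ y, π₀ (x - y) * gaussDensity t y) ∩ Set.Ioi 0) = 0 :=
      le_antisymm hz zero_le
    have hsub : {t : ℝ | w t ≠ 0} ∩ Set.Ioi 0 ⊆
        Function.support (fun t => w t * ∫ y, π₀ (x - y) * gaussDensity t y)
          ∩ Set.Ioi 0 := by
      rintro t ⟨hwne, ht⟩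
      refine ⟨?_, ht⟩
      have hintpos : 0 < ∫ y, π₀ (x - y) * gaussDensity t y := by
        have := (hconv x t ht)
        rw [integral_pos_iff_support_of_nonneg
          (fun y => mul_nonneg (hπpos _).le (hgt t y ht).le) this]
        have : Function.support (fun y => π₀ (x - y) * gaussDensity t y) = Set.univ := by
          ext y
          simp only [Function.mem_support, Set.mem_univ, iff_true]
          exact (mul_pos (hπpos _) (hgt t y ht)).ne'
        rw [this]
        exact isOpen_univ.measure_pos volume Set.univ_nonempty
      exact mul_ne_zero hwne hintpos.ne'
    have hz1 : volume ({t : ℝ | w t ≠ 0} ∩ Set.Ioi 0) = 0 :=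
      le_antisymm (le_trans (measure_mono hsub) hz0.le) zero_le
    have hae : w =ᵐ[volume.restrict (Set.Ioi 0)] 0 := by
      rw [Filter.EventuallyEq, ae_iff]
      simp only [Pi.zero_apply]
      have hms : MeasurableSet {a : ℝ | ¬ w a = 0} := by
        exact hwmeas (measurableSet_singleton (0:ℝ)).compl
      rw [Measure.restrict_apply hms]
      simpa using hz1
    have : (∫ t in Set.Ioi (0:ℝ), w t) = 0 := by
      rw [integral_congr_ae hae]; simp
    rw [hwprob] at this
    exact one_ne_zero this
  -- log μ is Lipschitz
  have hlipμ : LipschitzWith L.toNNReal (fun z => Real.log (μ z)) := by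
    apply LipschitzWith.of_dist_le_mul
    intro x x'
    rw [Real.dist_eq, Real.coe_toNNReal _ hL, dist_eq_norm]
    have hside : ∀ a b : EuclideanSpace ℝ (Fin d),
        Real.log (μ a) - Real.log (μ b) ≤ L * ‖a - b‖ := by
      intro a b
      have h := hμmono a b
      have := Real.log_le_log (hμpos a) h
      rw [Real.log_mul (Real.exp_ne_zero _) (hμpos b).ne', Real.log_exp] at this
      linarith
    rw [abs_sub_le_iff]
    constructor
    · exact hside x x'
    · have := hside x' x
      rwa [norm_sub_rev] at this
  intro x
  have h : ‖fderiv ℝ (fun z => Real.log (μ z)) x‖ ≤ (L.toNNReal : ℝ) :=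
    norm_fderiv_le_of_lipschitz ℝ hlipμ
  have heq : ‖gradient (fun z => Real.log (μ z)) x‖
      = ‖fderiv ℝ (fun z => Real.log (μ z)) x‖ := by
    rw [gradient]; exact LinearIsometryEquiv.norm_map _ _
  rw [heq]
  rwa [Real.coe_toNNReal _ hL] at h
end
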